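/- For a subcomplex Ω of the categorical product K² = K Π K, the following are equivalent: (1) Ω is a Farber subcomplex; (2) the restrictions of the two projections π₁, π₂ : K² → K to Ω are in the same contiguity class; (3) the restriction of π₁ (equivalently of π₂) to Ω is a homotopic section of the diagonal Δ : K → K², i.e., Δ∘(π₁|_Ω) is in the contiguity class of the inclusion Ω ⊆ K². -/

import Mathlib

attribute [local instance] Classical.decEq

/-- An abstract simplicial complex on vertex set `V`. -/
structure SC (V : Type) where
  faces : Set (Finset V)
  down_closed : ∀ {σ τ : Finset V}, σ ∈ faces → τ ⊆ σ → τ.Nonempty → τ ∈ faces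

/-- A vertex map inducing a simplicial map `K → L`. -/
def IsSimplicialMap {V W : Type} (K : SC V) (L : SC W) (f : V → W) : Prop :=
  ∀ σ ∈ K.faces, σ.image f ∈ L.faces

/-- Two maps are contiguous: for each simplex, the union of images is a simplex. -/
def Contiguous {V W : Type} (K : SC V) (L : SC W) (f g : V → W) : Prop :=
  ∀ σ ∈ K.faces, σ.image f ∪ σ.image g ∈ L.faces

/-- Being in the same contiguity class: connected by a finite chain of contiguous maps. -/
def ContigClass {V W : Type} (K : SC V) (L : SC W) : (V → W) → (V → W) → Prop :=
  Relation.ReflTransGen (Contiguous K L)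

/-- The categorical product of two simplicial complexes. -/
def prodSC {V W : Type} (K : SC V) (L : SC W) : SC (V × W) where
  faces := {σ | σ.image Prod.fst ∈ K.faces ∧ σ.image Prod.snd ∈ L.faces}
  down_closed := fun hσ hτσ hne =>
    ⟨K.down_closed hσ.1 (Finset.image_subset_image hτσ) (hne.image _),
     L.down_closed hσ.2 (Finset.image_subset_image hτσ) (hne.image _)⟩

/-- `Ω` is a Farber subcomplex of `K Π K`: a subcomplex admitting a simplicial map
`s : Ω → K` with `Δ ∘ s` in the contiguity class of the inclusion. -/
def IsFarber {V : Type} (K : SC V) (Ω : SC (V × V)) : Prop :=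
  Ω.faces ⊆ (prodSC K K).faces ∧
  ∃ s : V × V → V, IsSimplicialMap Ω K s ∧
    ContigClass Ω (prodSC K K) (fun p => (s p, s p)) id

/-- `K Π K` is covered by `n + 1` Farber subcomplexes. -/
def TCle {V : Type} (K : SC V) (n : ℕ) : Prop :=
  ∃ Ω : Fin (n + 1) → SC (V × V), (∀ i, IsFarber K (Ω i)) ∧
    ∀ σ ∈ (prodSC K K).faces, ∃ i, σ ∈ (Ω i).faces

/-- Discrete topological complexity. -/
noncomputable def TCdisc {V : Type} (K : SC V) : ℕ∞ :=
  sInf {n : ℕ∞ | ∃ m : ℕ, n = (m : ℕ∞) ∧ TCle K m}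

/-- A categorical subcomplex: the inclusion is in the contiguity class of a constant map
at a vertex of `K`. -/
def IsCategorical {V : Type} (K : SC V) (L : SC V) : Prop :=
  L.faces ⊆ K.faces ∧ ∃ v : V, {v} ∈ K.faces ∧ ContigClass L K id (fun _ => v)

/-- `K` is covered by `n + 1` categorical subcomplexes. -/
def scatLe {V : Type} (K : SC V) (n : ℕ) : Prop :=
  ∃ L : Fin (n + 1) → SC V, (∀ i, IsCategorical K (L i)) ∧
    ∀ σ ∈ K.faces, ∃ i, σ ∈ (L i).faces

/-- Normalized simplicial LS-category. -/
noncomputable def scat {V : Type} (K : SC V) : ℕ∞ :=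
  sInf {n : ℕ∞ | ∃ m : ℕ, n = (m : ℕ∞) ∧ scatLe K m}

/-- The preimage subcomplex of a subcomplex `Ω` under a vertex map `f`,
inside an ambient complex `M`. -/
def preimSC {V W : Type} (M : SC W) (Ω : SC V) (f : W → V) : SC W where
  faces := {τ | τ ∈ M.faces ∧ τ.image f ∈ Ω.faces}
  down_closed := fun hσ hτσ hne =>
    ⟨M.down_closed hσ.1 hτσ hne,
     Ω.down_closed hσ.2 (Finset.image_subset_image hτσ) (hne.image _)⟩

/-- `K` and `L` have the same strong homotopy type. -/
def StrongEquiv {V W : Type} (K : SC V) (L : SC W) : Prop :=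
  ∃ (φ : V → W) (ψ : W → V), IsSimplicialMap K L φ ∧ IsSimplicialMap L K ψ ∧
    ContigClass L L (φ ∘ ψ) id ∧ ContigClass K K (ψ ∘ φ) id

/-- `K` is edge-path connected. -/
def EdgeConn {V : Type} (K : SC V) : Prop :=
  ∀ v w : V, {v} ∈ K.faces → {w} ∈ K.faces →
    Relation.ReflTransGen (fun a b => ({a, b} : Finset V) ∈ K.faces) v w

/-- `K` is strongly collapsible: the identity is in the contiguity class of a constant map. -/
def StronglyCollapsible {V : Type} (K : SC V) : Prop :=
  ∃ v : V, {v} ∈ K.faces ∧ ContigClass K K id (fun _ => v)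

/-! A simplicial map `s : Ω → K` with `Δ ∘ s ∼ ι` yields, after projecting to either factor,
`π₁ ∼ s ∼ π₂` on `Ω`. Conversely, pairing a chain `π₁ ∼ π₂` with the fixed first coordinate
`π₁` gives `Δ ∘ π₁ = (π₁, π₁) ∼ (π₁, π₂) = ι`, so `π₁` itself is a witness; symmetrically,
pairing `π₂ ∼ π₁` with the fixed second coordinate `π₂` gives `Δ ∘ π₂ ∼ ι`. -/

section Contiguity

variable {V W X : Type} {K : SC V} {L : SC W} {M : SC X}

theorem Contiguous.symm {f g : V → W} (h : Contiguous K L f g) : Contiguous K L g f :=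
  fun σ hσ => Finset.union_comm (σ.image f) _ ▸ h σ hσ

theorem ContigClass.symm {f g : V → W} (h : ContigClass K L f g) : ContigClass K L g f := by
  induction h with
  | refl => exact .refl
  | tail _ hstep ih => exact ih.head hstep.symm

theorem IsSimplicialMap.contiguous_self {f : V → W} (hf : IsSimplicialMap K L f) :
    Contiguous K L f f :=
  fun σ hσ => (Finset.union_self (σ.image f)).symm ▸ hf σ hσ

theorem Contiguous.comp {f g : V → W} {t : W → X} (ht : IsSimplicialMap L M t)
    (h : Contiguous K L f g) : Contiguous K M (t ∘ f) (t ∘ g) := fun σ hσ => by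
  simpa only [Finset.image_union, Finset.image_image] using ht _ (h σ hσ)

theorem ContigClass.comp {f g : V → W} {t : W → X} (ht : IsSimplicialMap L M t)
    (h : ContigClass K L f g) : ContigClass K M (t ∘ f) (t ∘ g) :=
  h.lift (t ∘ ·) fun _ _ => Contiguous.comp ht

theorem Contiguous.prodMk {f f' : V → W} {g g' : V → X} (hf : Contiguous K L f f')
    (hg : Contiguous K M g g') :
    Contiguous K (prodSC L M) (fun x => (f x, g x)) (fun x => (f' x, g' x)) := fun σ hσ =>
  ⟨by simpa only [Finset.image_union, Finset.image_image, Function.comp_def] using hf σ hσ,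
    by simpa only [Finset.image_union, Finset.image_image, Function.comp_def] using hg σ hσ⟩

theorem ContigClass.prodMk_left {a : V → W} {f g : V → X} (ha : IsSimplicialMap K L a)
    (h : ContigClass K M f g) :
    ContigClass K (prodSC L M) (fun x => (a x, f x)) (fun x => (a x, g x)) := by
  induction h with
  | refl => exact .refl
  | tail _ hstep ih => exact ih.tail (ha.contiguous_self.prodMk hstep)

theorem ContigClass.prodMk_right {a : V → X} {f g : V → W} (ha : IsSimplicialMap K M a)
    (h : ContigClass K L f g) :
    ContigClass K (prodSC L M) (fun x => (f x, a x)) (fun x => (g x, a x)) := by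
  induction h with
  | refl => exact .refl
  | tail _ hstep ih => exact ih.tail (hstep.prodMk ha.contiguous_self)

theorem isSimplicialMap_fst {Ω : SC (W × X)} (hΩ : Ω.faces ⊆ (prodSC L M).faces) :
    IsSimplicialMap Ω L Prod.fst :=
  fun _ hσ => (hΩ hσ).1

theorem isSimplicialMap_snd {Ω : SC (W × X)} (hΩ : Ω.faces ⊆ (prodSC L M).faces) :
    IsSimplicialMap Ω M Prod.snd :=
  fun _ hσ => (hΩ hσ).2

end Contiguity

section Farber

variable {V : Type} {K : SC V} {Ω : SC (V × V)}

theorem IsFarber.contigClass_fst_snd (h : IsFarber K Ω) : ContigClass Ω K Prod.fst Prod.snd := by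
  obtain ⟨-, s, -, hs⟩ := h
  have hfst : ContigClass Ω K s Prod.fst := hs.comp (isSimplicialMap_fst subset_rfl)
  have hsnd : ContigClass Ω K s Prod.snd := hs.comp (isSimplicialMap_snd subset_rfl)
  exact hfst.symm.trans hsnd

theorem contigClass_diag_fst_id (hΩ : Ω.faces ⊆ (prodSC K K).faces)
    (h : ContigClass Ω K Prod.fst Prod.snd) :
    ContigClass Ω (prodSC K K) (fun p => (p.1, p.1)) id :=
  h.prodMk_left (isSimplicialMap_fst hΩ)

theorem contigClass_diag_snd_id (hΩ : Ω.faces ⊆ (prodSC K K).faces)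
    (h : ContigClass Ω K Prod.fst Prod.snd) :
    ContigClass Ω (prodSC K K) (fun p => (p.2, p.2)) id :=
  h.symm.prodMk_right (isSimplicialMap_snd hΩ)

end Farber

theorem isFarber_iff {V : Type} (K : SC V) (Ω : SC (V × V))
    (hΩ : Ω.faces ⊆ (prodSC K K).faces) :
    (IsFarber K Ω ↔ ContigClass Ω K Prod.fst Prod.snd) ∧
    (IsFarber K Ω ↔ ContigClass Ω (prodSC K K) (fun p => (p.1, p.1)) id) ∧
    (IsFarber K Ω ↔ ContigClass Ω (prodSC K K) (fun p => (p.2, p.2)) id) := by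
  have isFarber_of_fst : ContigClass Ω (prodSC K K) (fun p => (p.1, p.1)) id → IsFarber K Ω :=
    fun h => ⟨hΩ, Prod.fst, isSimplicialMap_fst hΩ, h⟩
  have isFarber_of_snd : ContigClass Ω (prodSC K K) (fun p => (p.2, p.2)) id → IsFarber K Ω :=
    fun h => ⟨hΩ, Prod.snd, isSimplicialMap_snd hΩ, h⟩
  exact ⟨⟨IsFarber.contigClass_fst_snd, isFarber_of_fst ∘ contigClass_diag_fst_id hΩ⟩,
    ⟨contigClass_diag_fst_id hΩ ∘ IsFarber.contigClass_fst_snd, isFarber_of_fst⟩,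
    ⟨contigClass_diag_snd_id hΩ ∘ IsFarber.contigClass_fst_snd, isFarber_of_snd⟩⟩
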